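/- arXiv:1307.4458 — 3 statements merged into one kernel-verified Lean document; each statement's English description precedes it below -/
import Mathlib

section
/- Let X be a compactly generated topological space with a distinguished family F of compact sets, and let 𝒜 → X be a C*-bundle over X. Then the *-algebra Γ(𝒜) of continuous sections, equipped with the topology generated by the C*-seminorms ‖φ‖_K = sup_{x∈K} ‖φ(x)‖_x for K ∈ F, is a locally C*-algebra (i.e., this topology is Hausdorff, complete, and generated by C*-seminorms). -/
/-!
Everything except completeness is fibrewise C*-algebra arithmetic, together with the
boundedness of the upper semicontinuous function `x ↦ ‖φ x‖` on compact sets.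

A net of continuous sections that is uniformly Cauchy on every `K ∈ F` converges pointwise
(singletons lie in `F` and the fibres are complete), hence uniformly on each `K`. The limit `φ`
is continuous on each `K` at `x₀`: write `φ = u n + (φ - u n)`, where for large `n` the first
summand lies near `φ x₀` and the second is uniformly small on `K`. By the axiom `tendsto_zero`,
small elements over points near `x₀` are close to `0_{x₀}`, so continuity of addition at
`(φ x₀, 0_{x₀})` applies. Coherence of the topology with `F` makes `φ` continuous on `X`.
-/

/-- An upper semicontinuous C*-bundle in the sense of Dauns–Hofmann, with total space
`Σ x, A x`. -/
structure IsCStarBundle (X : Type) [TopologicalSpace X] (A : X → Type)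
    [∀ x, NormedRing (A x)] [∀ x, StarRing (A x)] [∀ x, CStarRing (A x)]
    [∀ x, NormedAlgebra ℂ (A x)] [∀ x, StarModule ℂ (A x)] [∀ x, CompleteSpace (A x)]
    [TopologicalSpace (Σ x, A x)] : Prop where
  continuous_proj : Continuous (Sigma.fst : (Σ x, A x) → X)
  isOpenMap_proj : IsOpenMap (Sigma.fst : (Σ x, A x) → X)
  inducing_fiber : ∀ x : X, Topology.IsInducing (fun a : A x => (⟨x, a⟩ : Σ x, A x))
  continuous_add : Continuous fun p : {p : (Σ x, A x) × (Σ x, A x) // p.1.1 = p.2.1} =>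
    (⟨p.1.1.1, p.1.1.2 + cast (congrArg A p.2).symm p.1.2.2⟩ : Σ x, A x)
  continuous_mul : Continuous fun p : {p : (Σ x, A x) × (Σ x, A x) // p.1.1 = p.2.1} =>
    (⟨p.1.1.1, p.1.1.2 * cast (congrArg A p.2).symm p.1.2.2⟩ : Σ x, A x)
  continuous_smul : Continuous fun q : ℂ × (Σ x, A x) => (⟨q.2.1, q.1 • q.2.2⟩ : Σ x, A x)
  continuous_star : Continuous fun a : (Σ x, A x) => (⟨a.1, star a.2⟩ : Σ x, A x)
  usc_norm : UpperSemicontinuous fun a : (Σ x, A x) => ‖a.2‖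
  tendsto_zero : ∀ {ι : Type} (l : Filter ι) (f : ι → Σ x, A x) (x : X),
    Filter.Tendsto (fun i => ‖(f i).2‖) l (nhds 0) →
    Filter.Tendsto (fun i => (f i).1) l (nhds x) →
    Filter.Tendsto f l (nhds (⟨x, 0⟩ : Σ x, A x))

def IsContinuousSection {X : Type} [TopologicalSpace X] {A : X → Type}
    [TopologicalSpace (Σ x, A x)] (φ : ∀ x, A x) : Prop :=
  Continuous fun x : X => (⟨x, φ x⟩ : Σ x, A x)

/-- `directLimit` says that `X` carries the direct limit topology of `F`. -/
structure IsDistinguishedFamily (X : Type) [TopologicalSpace X] (F : Set (Set X)) :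
    Prop where
  singleton_mem : ∀ x : X, {x} ∈ F
  compact_mem : ∀ K ∈ F, IsCompact K
  compact_subset_mem : ∀ K ∈ F, ∀ L ⊆ K, IsCompact L → L ∈ F
  union_mem : ∀ K ∈ F, ∀ L ∈ F, K ∪ L ∈ F
  directLimit : Topology.IsCoherentWith F

open Filter Topology Set

section SupNorm

variable {ι : Type*} {B : ι → Type*}

theorem iSup_norm_add_le [∀ i, SeminormedAddCommGroup (B i)] {f g : ∀ i, B i}
    (hf : BddAbove (range fun i => ‖f i‖)) (hg : BddAbove (range fun i => ‖g i‖)) :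
    ⨆ i, ‖(f + g) i‖ ≤ (⨆ i, ‖f i‖) + ⨆ i, ‖g i‖ :=
  Real.iSup_le
    (fun i => (norm_add_le _ _).trans (add_le_add (le_ciSup hf i) (le_ciSup hg i)))
    (add_nonneg (Real.iSup_nonneg fun _ => norm_nonneg _)
      (Real.iSup_nonneg fun _ => norm_nonneg _))

theorem iSup_norm_mul_le [∀ i, NonUnitalSeminormedRing (B i)] {f g : ∀ i, B i}
    (hf : BddAbove (range fun i => ‖f i‖)) (hg : BddAbove (range fun i => ‖g i‖)) :
    ⨆ i, ‖(f * g) i‖ ≤ (⨆ i, ‖f i‖) * ⨆ i, ‖g i‖ := by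
  have hf₀ : 0 ≤ ⨆ i, ‖f i‖ := Real.iSup_nonneg fun _ => norm_nonneg _
  have hg₀ : 0 ≤ ⨆ i, ‖g i‖ := Real.iSup_nonneg fun _ => norm_nonneg _
  refine Real.iSup_le (fun i => (norm_mul_le _ _).trans ?_) (mul_nonneg hf₀ hg₀)
  exact mul_le_mul (le_ciSup hf i) (le_ciSup hg i) (norm_nonneg _) hf₀

theorem iSup_norm_smul {𝕜 : Type*} [NormedField 𝕜] [∀ i, SeminormedAddCommGroup (B i)]
    [∀ i, NormedSpace 𝕜 (B i)] (c : 𝕜) (f : ∀ i, B i) :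
    ⨆ i, ‖(c • f) i‖ = ‖c‖ * ⨆ i, ‖f i‖ := by
  simp only [Pi.smul_apply, norm_smul, Real.mul_iSup_of_nonneg (norm_nonneg c)]

theorem iSup_norm_star [∀ i, SeminormedAddCommGroup (B i)] [∀ i, StarAddMonoid (B i)]
    [∀ i, NormedStarGroup (B i)] (f : ∀ i, B i) :
    ⨆ i, ‖(star f) i‖ = ⨆ i, ‖f i‖ :=
  iSup_congr fun i => norm_star (f i)

theorem iSup_norm_star_mul_self [∀ i, NonUnitalNormedRing (B i)] [∀ i, StarRing (B i)]
    [∀ i, CStarRing (B i)] (f : ∀ i, B i) :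
    ⨆ i, ‖(star f * f) i‖ = (⨆ i, ‖f i‖) ^ 2 := by
  simp only [Real.iSup_pow_of_ne_zero (fun i => norm_nonneg (f i)) two_ne_zero, Pi.mul_apply,
    Pi.star_apply, CStarRing.norm_star_mul_self, sq]

end SupNorm

theorem norm_sub_le_of_uniformCauchyOn {X ι : Type*} {A : X → Type*}
    [∀ x, SeminormedAddCommGroup (A x)] [SemilatticeSup ι] {u : ι → ∀ x, A x}
    {φ : ∀ x, A x} {K : Set X} (hφ : ∀ x ∈ K, Tendsto (fun n => u n x) atTop (𝓝 (φ x)))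
    {ε : ℝ} {n₀ : ι} (hn₀ : ∀ m n, n₀ ≤ m → n₀ ≤ n → ∀ x ∈ K, ‖u m x - u n x‖ ≤ ε)
    {n : ι} (hn : n₀ ≤ n) {x : X} (hx : x ∈ K) : ‖u n x - φ x‖ ≤ ε :=
  have : Nonempty ι := ⟨n₀⟩
  le_of_tendsto (tendsto_const_nhds.sub (hφ x hx)).norm
    (eventually_atTop.2 ⟨n₀, fun _ hm => hn₀ n _ hn hm x hx⟩)

theorem IsContinuousSection.continuous_pair {X : Type} [TopologicalSpace X] {A : X → Type}
    [TopologicalSpace (Σ x, A x)] {φ ψ : ∀ x, A x} (hφ : IsContinuousSection φ)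
    (hψ : IsContinuousSection ψ) :
    Continuous fun x : X =>
      (⟨(⟨x, φ x⟩, ⟨x, ψ x⟩), rfl⟩ : {p : (Σ x, A x) × (Σ x, A x) // p.1.1 = p.2.1}) :=
  (hφ.prodMk hψ).subtype_mk _

namespace IsCStarBundle

variable {X : Type} [TopologicalSpace X] {A : X → Type}
  [∀ x, NormedRing (A x)] [∀ x, StarRing (A x)] [∀ x, CStarRing (A x)]
  [∀ x, NormedAlgebra ℂ (A x)] [∀ x, StarModule ℂ (A x)] [∀ x, CompleteSpace (A x)]
  [TopologicalSpace (Σ x, A x)]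

theorem isContinuousSection_zero (hb : IsCStarBundle X A) :
    IsContinuousSection (0 : ∀ x, A x) :=
  continuous_iff_continuousAt.2 fun x =>
    hb.tendsto_zero (𝓝 x) _ x (by simp) tendsto_id

theorem isContinuousSection_add (hb : IsCStarBundle X A) {φ ψ : ∀ x, A x}
    (hφ : IsContinuousSection φ) (hψ : IsContinuousSection ψ) : IsContinuousSection (φ + ψ) :=
  hb.continuous_add.comp (hφ.continuous_pair hψ)

theorem isContinuousSection_mul (hb : IsCStarBundle X A) {φ ψ : ∀ x, A x}
    (hφ : IsContinuousSection φ) (hψ : IsContinuousSection ψ) : IsContinuousSection (φ * ψ) :=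
  hb.continuous_mul.comp (hφ.continuous_pair hψ)

theorem isContinuousSection_smul (hb : IsCStarBundle X A) (c : ℂ) {φ : ∀ x, A x}
    (hφ : IsContinuousSection φ) : IsContinuousSection (c • φ) :=
  hb.continuous_smul.comp (continuous_const.prodMk hφ)

theorem isContinuousSection_star (hb : IsCStarBundle X A) {φ : ∀ x, A x}
    (hφ : IsContinuousSection φ) : IsContinuousSection (star φ) :=
  hb.continuous_star.comp hφ

theorem bddAbove_norm_of_isCompact (hb : IsCStarBundle X A) {φ : ∀ x, A x}
    (hφ : IsContinuousSection φ) {K : Set X} (hK : IsCompact K) :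
    BddAbove (range fun x : K => ‖φ x.1‖) := by
  have h := ((hb.usc_norm.comp hφ).upperSemicontinuousOn K).bddAbove_of_isCompact hK
  rwa [image_eq_range] at h

theorem comap_norm_inf_comap_proj_le_nhds_zero (hb : IsCStarBundle X A) (x₀ : X) :
    comap (fun t : Σ x, A x => ‖t.2‖) (𝓝 0) ⊓ comap Sigma.fst (𝓝 x₀) ≤
      𝓝 (⟨x₀, 0⟩ : Σ x, A x) :=
  tendsto_id'.1 <| hb.tendsto_zero _ id x₀ (tendsto_comap.mono_left inf_le_left)
    (tendsto_comap.mono_left inf_le_right)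

theorem exists_nhds_add_mem (hb : IsCStarBundle X A) {x₀ : X} {a : A x₀}
    {U : Set (Σ x, A x)} (hU : U ∈ 𝓝 (⟨x₀, a⟩ : Σ x, A x)) :
    ∃ W, IsOpen W ∧ (⟨x₀, a⟩ : Σ x, A x) ∈ W ∧ ∃ ε > 0, ∃ V ∈ 𝓝 x₀, ∀ x ∈ V, ∀ b c : A x,
      (⟨x, b⟩ : Σ x, A x) ∈ W → ‖c‖ < ε → (⟨x, b + c⟩ : Σ x, A x) ∈ U := by
  let p₀ : {p : (Σ x, A x) × (Σ x, A x) // p.1.1 = p.2.1} := ⟨(⟨x₀, a⟩, ⟨x₀, 0⟩), rfl⟩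
  have hU₀ : U ∈ 𝓝 (⟨x₀, a + 0⟩ : Σ x, A x) := by rwa [add_zero]
  obtain ⟨P, hP, hPU⟩ :=
    (mem_nhds_subtype _ _ _).1 (hb.continuous_add.continuousAt (x := p₀) hU₀)
  obtain ⟨W, W₀, hWo, hW, hW₀o, hW₀, hWW₀⟩ := mem_nhds_prod_iff'.1 hP
  have hbasis := ((Metric.nhds_basis_ball (x := (0 : ℝ))).comap fun t : Σ x, A x => ‖t.2‖).inf
    ((𝓝 x₀).basis_sets.comap Sigma.fst)
  obtain ⟨⟨ε, V⟩, ⟨hε, hV⟩, hsub⟩ :=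
    hbasis.mem_iff.1 (hb.comap_norm_inf_comap_proj_le_nhds_zero x₀ (hW₀o.mem_nhds hW₀))
  refine ⟨W, hWo, hW, ε, hε, V, hV, fun x hx b c hbW hc => ?_⟩
  have hc' : ‖(⟨x, c⟩ : Σ x, A x).2‖ ∈ Metric.ball 0 ε := by simpa using hc
  exact hPU (a := ⟨(⟨x, b⟩, ⟨x, c⟩), rfl⟩) (hWW₀ ⟨hbW, hsub ⟨hc', hx⟩⟩)

theorem continuousWithinAt_of_tendstoUniformlyOn (hb : IsCStarBundle X A) {ι : Type*}
    {l : Filter ι} [l.NeBot] {u : ι → ∀ x, A x} {φ : ∀ x, A x} {K : Set X} {x₀ : X}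
    (hu : ∀ n, ContinuousWithinAt (fun x => (⟨x, u n x⟩ : Σ x, A x)) K x₀)
    (hx₀ : Tendsto (fun n => u n x₀) l (𝓝 (φ x₀)))
    (hunif : ∀ ε > 0, ∀ᶠ n in l, ∀ x ∈ K, ‖φ x - u n x‖ < ε) :
    ContinuousWithinAt (fun x => (⟨x, φ x⟩ : Σ x, A x)) K x₀ := by
  intro U hU
  obtain ⟨W, hWo, hW, ε, hε, V, hV, hadd⟩ := hb.exists_nhds_add_mem hU
  have hfiber := ((hb.inducing_fiber x₀).continuous.tendsto _).comp hx₀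
  obtain ⟨n, hnW, hn⟩ := ((hfiber.eventually_mem (hWo.mem_nhds hW)).and (hunif ε hε)).exists
  rw [mem_map]
  filter_upwards [hu n (hWo.mem_nhds hnW), mem_nhdsWithin_of_mem_nhds hV, self_mem_nhdsWithin]
    with x hxW hxV hxK
  simpa using hadd x hxV _ _ hxW (hn x hxK)

theorem isContinuousSection_of_tendstoUniformlyOn (hb : IsCStarBundle X A)
    {F : Set (Set X)} (hF : IsCoherentWith F) {ι : Type*} {l : Filter ι} [l.NeBot]
    {u : ι → ∀ x, A x} {φ : ∀ x, A x} (hu : ∀ n, IsContinuousSection (u n))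
    (hlim : ∀ x, Tendsto (fun n => u n x) l (𝓝 (φ x)))
    (hunif : ∀ K ∈ F, ∀ ε > 0, ∀ᶠ n in l, ∀ x ∈ K, ‖φ x - u n x‖ < ε) :
    IsContinuousSection φ :=
  hF.continuous_iff.2 fun K hK x₀ _ =>
    hb.continuousWithinAt_of_tendstoUniformlyOn (fun n => (hu n).continuousWithinAt)
      (hlim x₀) (hunif K hK)

theorem exists_isContinuousSection_of_uniformCauchy (hb : IsCStarBundle X A)
    {F : Set (Set X)} (hF : IsDistinguishedFamily X F) {ι : Type*} [Nonempty ι]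
    [SemilatticeSup ι] {u : ι → ∀ x, A x} (hu : ∀ n, IsContinuousSection (u n))
    (hcau : ∀ K ∈ F, ∀ ε : ℝ, 0 < ε → ∃ n₀ : ι, ∀ m n : ι, n₀ ≤ m → n₀ ≤ n →
      ∀ x ∈ K, ‖u m x - u n x‖ ≤ ε) :
    ∃ φ : ∀ x, A x, IsContinuousSection φ ∧
      ∀ K ∈ F, ∀ ε : ℝ, 0 < ε → ∃ n₀ : ι, ∀ n : ι, n₀ ≤ n → ∀ x ∈ K, ‖u n x - φ x‖ ≤ ε := by
  have hpt : ∀ x, CauchySeq fun n => u n x := fun x => Metric.cauchySeq_iff'.2 fun ε hε => by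
    obtain ⟨n₀, hn₀⟩ := hcau {x} (hF.singleton_mem x) (ε / 2) (half_pos hε)
    refine ⟨n₀, fun n hn => ?_⟩
    rw [dist_eq_norm]
    exact (hn₀ n n₀ hn le_rfl x rfl).trans_lt (half_lt_self hε)
  choose φ hφ using fun x => cauchySeq_tendsto_of_complete (hpt x)
  have hunif : ∀ K ∈ F, ∀ ε : ℝ, 0 < ε → ∃ n₀ : ι, ∀ n, n₀ ≤ n → ∀ x ∈ K,
      ‖u n x - φ x‖ ≤ ε := fun K hK ε hε => by
    obtain ⟨n₀, hn₀⟩ := hcau K hK ε hε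
    exact ⟨n₀, fun n hn x hx => norm_sub_le_of_uniformCauchyOn (fun x _ => hφ x) hn₀ hn hx⟩
  refine ⟨φ, hb.isContinuousSection_of_tendstoUniformlyOn hF.directLimit hu hφ
    fun K hK ε hε => ?_, hunif⟩
  obtain ⟨n₀, hn₀⟩ := hunif K hK (ε / 2) (half_pos hε)
  filter_upwards [eventually_ge_atTop n₀] with n hn x hx
  rw [norm_sub_rev]
  exact (hn₀ n hn x hx).trans_lt (half_lt_self hε)

end IsCStarBundle

/-- for a compactly generated space `X` with distinguished family `F` of
compact sets and a C*-bundle `𝒜 → X`, the *-algebra `Γ(𝒜)` of continuous sections with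
the topology generated by the C*-seminorms `‖φ‖_K = ⨆_{x ∈ K} ‖φ x‖`, `K ∈ F`, is a
locally C*-algebra: the `‖·‖_K` are finite C*-seminorms, the topology they generate is
Hausdorff (they jointly separate points from 0) and complete (every Cauchy net of
sections, uniformly Cauchy on each `K ∈ F`, converges uniformly on each `K ∈ F` to a
continuous section). -/
theorem sections_compactly_generated_locally_cstar
    (X : Type) [TopologicalSpace X] (F : Set (Set X)) (hF : IsDistinguishedFamily X F)
    (A : X → Type)
    [∀ x, NormedRing (A x)] [∀ x, StarRing (A x)] [∀ x, CStarRing (A x)]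
    [∀ x, NormedAlgebra ℂ (A x)] [∀ x, StarModule ℂ (A x)] [∀ x, CompleteSpace (A x)]
    [TopologicalSpace (Σ x, A x)] (hbundle : IsCStarBundle X A) :
    -- Γ(𝒜) is a *-subalgebra of Π x, A x for the pointwise operations
    (IsContinuousSection (0 : ∀ x, A x)) ∧
    (∀ φ ψ : ∀ x, A x, IsContinuousSection φ → IsContinuousSection ψ →
      IsContinuousSection (φ + ψ) ∧ IsContinuousSection (φ * ψ)) ∧
    (∀ (c : ℂ) (φ : ∀ x, A x), IsContinuousSection φ → IsContinuousSection (c • φ)) ∧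
    (∀ φ : ∀ x, A x, IsContinuousSection φ → IsContinuousSection (star φ)) ∧
    -- each ‖·‖_K is a finite C*-seminorm on Γ(𝒜)
    (∀ K ∈ F, ∀ φ : ∀ x, A x, IsContinuousSection φ →
      BddAbove (Set.range fun x : K => ‖φ x.1‖)) ∧
    (∀ K ∈ F, ∀ φ ψ : ∀ x, A x, IsContinuousSection φ → IsContinuousSection ψ →
      (⨆ x : K, ‖(φ + ψ) x.1‖) ≤ (⨆ x : K, ‖φ x.1‖) + (⨆ x : K, ‖ψ x.1‖) ∧
      (⨆ x : K, ‖(φ * ψ) x.1‖) ≤ (⨆ x : K, ‖φ x.1‖) * (⨆ x : K, ‖ψ x.1‖)) ∧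
    (∀ K ∈ F, ∀ (c : ℂ) (φ : ∀ x, A x), IsContinuousSection φ →
      (⨆ x : K, ‖(c • φ) x.1‖) = ‖c‖ * ⨆ x : K, ‖φ x.1‖) ∧
    (∀ K ∈ F, ∀ φ : ∀ x, A x, IsContinuousSection φ →
      (⨆ x : K, ‖(star φ) x.1‖) = (⨆ x : K, ‖φ x.1‖) ∧
      (⨆ x : K, ‖(star φ * φ) x.1‖) = (⨆ x : K, ‖φ x.1‖) ^ 2) ∧
    -- the topology generated by the ‖·‖_K is Hausdorff
    (∀ φ : ∀ x, A x, IsContinuousSection φ → (∀ K ∈ F, (⨆ x : K, ‖φ x.1‖) = 0) →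
      φ = 0) ∧
    -- and complete
    (∀ (ι : Type) (_ : Nonempty ι) (_ : SemilatticeSup ι) (u : ι → ∀ x, A x),
      (∀ n, IsContinuousSection (u n)) →
      (∀ K ∈ F, ∀ ε : ℝ, 0 < ε → ∃ n₀ : ι, ∀ m n : ι, n₀ ≤ m → n₀ ≤ n →
        ∀ x ∈ K, ‖u m x - u n x‖ ≤ ε) →
      ∃ φ : ∀ x, A x, IsContinuousSection φ ∧
        ∀ K ∈ F, ∀ ε : ℝ, 0 < ε → ∃ n₀ : ι, ∀ n : ι, n₀ ≤ n →
          ∀ x ∈ K, ‖u n x - φ x‖ ≤ ε) := by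
  have hbdd : ∀ K ∈ F, ∀ φ : ∀ x, A x, IsContinuousSection φ →
      BddAbove (range fun x : K => ‖φ x.1‖) := fun K hK _ hφ =>
    hbundle.bddAbove_norm_of_isCompact hφ (hF.compact_mem K hK)
  refine ⟨hbundle.isContinuousSection_zero,
    fun φ ψ hφ hψ => ⟨hbundle.isContinuousSection_add hφ hψ,
      hbundle.isContinuousSection_mul hφ hψ⟩,
    fun c φ hφ => hbundle.isContinuousSection_smul c hφ,
    fun φ hφ => hbundle.isContinuousSection_star hφ, hbdd,
    fun K hK φ ψ hφ hψ => ⟨iSup_norm_add_le (hbdd K hK φ hφ) (hbdd K hK ψ hψ),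
      iSup_norm_mul_le (hbdd K hK φ hφ) (hbdd K hK ψ hψ)⟩,
    fun K _ c φ _ => iSup_norm_smul c fun x : K => φ x,
    fun K _ φ _ => ⟨iSup_norm_star fun x : K => φ x, iSup_norm_star_mul_self fun x : K => φ x⟩,
    fun φ _ h => funext fun x => ?_,
    fun ι _ _ u hu hcau => hbundle.exists_isContinuousSection_of_uniformCauchy hF hu hcau⟩
  have hx := h {x} (hF.singleton_mem x)
  rwa [ciSup_unique, norm_eq_zero] at hx
end

section
/- Let A be a locally C*-algebra with Michael–Arens decomposition (A_s)_{s∈S(A)}. Then Prim A, equipped with the direct limit topology from the closed subspaces h(ker s) ≅ Prim A_s, is the set-theoretic direct limit of the spaces Prim A_s: the subsets h(ker s), s ∈ S(A), cover Prim A, and for ker s ⊆ ker r the inclusion h(ker r) ⊆ h(ker s) corresponds to the map Prim A_r → Prim A_s induced by the quotient A_s → A_r. -/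
/-- A C*-seminorm on a complex *-algebra. -/
def IsCStarSeminorm {A : Type} [Ring A] [StarRing A] [Algebra ℂ A] (s : A → ℝ) : Prop :=
  (∀ a : A, 0 ≤ s a) ∧ (∀ a b : A, s (a + b) ≤ s a + s b) ∧
  (∀ (c : ℂ) (a : A), s (c • a) = ‖c‖ * s a) ∧
  (∀ a b : A, s (a * b) ≤ s a * s b) ∧ (∀ a : A, s (star a) = s a) ∧
  (∀ a : A, s (star a * a) = (s a) ^ 2)

/-- The directed set `S(A)` of continuous C*-seminorms on a topological *-algebra. -/
def ContCStarSeminorms (A : Type) [Ring A] [StarRing A] [Algebra ℂ A]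
    [TopologicalSpace A] : Set (A → ℝ) :=
  {s | Continuous s ∧ IsCStarSeminorm s}

/-- `A` is a locally C*-algebra: a complete Hausdorff topological *-algebra whose
topology is generated by its (continuous) C*-seminorms. -/
def IsLocallyCStarAlgebra (A : Type) [Ring A] [StarRing A] [Algebra ℂ A]
    [TopologicalSpace A] [IsTopologicalRing A] : Prop :=
  T2Space A ∧ @CompleteSpace A (IsTopologicalAddGroup.rightUniformSpace A) ∧
  ∀ U : Set A, IsOpen U ↔ ∀ a ∈ U,
    ∃ F : Finset {s // s ∈ ContCStarSeminorms A}, ∃ ε : ℝ, 0 < ε ∧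
      {b : A | ∀ s ∈ F, s.1 (b - a) < ε} ⊆ U

/-- A (continuous) irreducible *-representation of a topological complex *-algebra
on a complex Hilbert space: the only closed invariant subspaces are `⊥` and `⊤`. -/
structure IrreducibleRep (A : Type) [Ring A] [StarRing A] [Algebra ℂ A]
    [TopologicalSpace A] where
  H : Type
  [ng : NormedAddCommGroup H]
  [ip : InnerProductSpace ℂ H]
  [cs : CompleteSpace H]
  [nt : Nontrivial H]
  π : A →⋆ₐ[ℂ] (H →L[ℂ] H)
  cont : Continuous π
  irred : ∀ V : Submodule ℂ H, IsClosed (V : Set H) →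
    (∀ a : A, ∀ v ∈ V, π a v ∈ V) → V = ⊥ ∨ V = ⊤

attribute [instance] IrreducibleRep.ng IrreducibleRep.ip IrreducibleRep.cs IrreducibleRep.nt

/-- A primitive ideal: the kernel of some irreducible representation. -/
def IsPrimitiveIdeal {A : Type} [Ring A] [StarRing A] [Algebra ℂ A] [TopologicalSpace A]
    (P : TwoSidedIdeal A) : Prop :=
  ∃ ρ : IrreducibleRep A, ∀ a : A, a ∈ P ↔ ρ.π a = 0

/-- The primitive spectrum of `A`. -/
def PrimSpec (A : Type) [Ring A] [StarRing A] [Algebra ℂ A] [TopologicalSpace A] :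
    Type :=
  {P : TwoSidedIdeal A // IsPrimitiveIdeal P}

/-- The hull of an ideal: the set of primitive ideals containing it. -/
def hkHull {A : Type} [Ring A] [StarRing A] [Algebra ℂ A] [TopologicalSpace A]
    (I : TwoSidedIdeal A) : Set (PrimSpec A) :=
  {P | I ≤ P.val}

/-- The kernel (as a set) of a C*-seminorm. -/
def snKer {A : Type} [Ring A] [StarRing A] [Algebra ℂ A] (s : A → ℝ) :
    TwoSidedIdeal A :=
  sInf {I : TwoSidedIdeal A | {a : A | s a = 0} ⊆ I}

/- An irreducible representation `ρ` of `A` gives the C*-seminorm `a ↦ ‖ρ.π a‖`, continuous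
because `ρ.π` is, and whose kernel is `ker ρ`; so every primitive ideal lies in the hull of
the kernel of some continuous C*-seminorm, i.e. `ρ` factors through the corresponding `A_s`. -/

theorem IsCStarSeminorm.norm_comp {A B : Type} [Ring A] [StarRing A] [Algebra ℂ A]
    [NormedRing B] [StarRing B] [CStarRing B] [NormedAlgebra ℂ B] (φ : A →⋆ₐ[ℂ] B) :
    IsCStarSeminorm (fun a => ‖φ a‖) := by
  refine ⟨fun a => norm_nonneg _, fun a b => ?_, fun c a => ?_, fun a b => ?_, fun a => ?_,
    fun a => ?_⟩
  · simpa only [map_add] using norm_add_le (φ a) (φ b)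
  · simp only [map_smul, norm_smul]
  · simpa only [map_mul] using norm_mul_le (φ a) (φ b)
  · simp only [map_star, norm_star]
  · simp only [map_mul, map_star, CStarRing.norm_star_mul_self, sq]

theorem norm_comp_mem_contCStarSeminorms {A B : Type} [Ring A] [StarRing A] [Algebra ℂ A]
    [TopologicalSpace A] [NormedRing B] [StarRing B] [CStarRing B] [NormedAlgebra ℂ B]
    (φ : A →⋆ₐ[ℂ] B) (hφ : Continuous φ) :
    (fun a => ‖φ a‖) ∈ ContCStarSeminorms A :=
  ⟨continuous_norm.comp hφ, IsCStarSeminorm.norm_comp φ⟩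

theorem snKer_le_of_forall {A : Type} [Ring A] [StarRing A] [Algebra ℂ A] {s : A → ℝ}
    {I : TwoSidedIdeal A} (h : ∀ a, s a = 0 → a ∈ I) : snKer s ≤ I :=
  sInf_le h

theorem hkHull_anti {A : Type} [Ring A] [StarRing A] [Algebra ℂ A] [TopologicalSpace A]
    {I J : TwoSidedIdeal A} (h : I ≤ J) : hkHull J ⊆ hkHull I :=
  fun _ hP => le_trans h hP

theorem PrimSpec.exists_mem_hkHull_snKer {A : Type} [Ring A] [StarRing A] [Algebra ℂ A]
    [TopologicalSpace A] (P : PrimSpec A) :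
    ∃ s ∈ ContCStarSeminorms A, P ∈ hkHull (snKer s) := by
  obtain ⟨ρ, hρ⟩ := P.2
  exact ⟨_, norm_comp_mem_contCStarSeminorms ρ.π ρ.cont,
    snKer_le_of_forall fun a ha => (hρ a).2 (norm_eq_zero.mp ha)⟩

theorem primSpec_direct_limit_general
    (A : Type) [Ring A] [StarRing A] [Algebra ℂ A] [TopologicalSpace A] :
    -- the subsets h(ker s) cover Prim A
    (⋃ s ∈ ContCStarSeminorms A, hkHull (snKer s)) = (Set.univ : Set (PrimSpec A)) ∧
    -- and for ker s ⊆ ker r, h(ker r) ⊆ h(ker s), the inclusion being induced by the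
    -- quotient map A_s → A_r (i.e. given on primitive ideals of A by the identity)
    (∀ s ∈ ContCStarSeminorms A, ∀ r ∈ ContCStarSeminorms A,
      snKer s ≤ snKer r → hkHull (snKer r) ⊆ hkHull (snKer s)) := by
  refine ⟨Set.eq_univ_of_forall fun P => ?_, fun s _ r _ hsr => hkHull_anti hsr⟩
  simpa only [Set.mem_iUnion, exists_prop] using P.exists_mem_hkHull_snKer

/-- for a locally C*-algebra `A` with Michael–Arens decomposition
`(A_s)_{s ∈ S(A)}`, `Prim A` is the set-theoretic direct limit of the spaces
`Prim A_s ≅ h(ker s)`: the closed subsets `h(ker s)`, `s ∈ S(A)`, cover `Prim A`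
(every irreducible representation factors through some `A_s`), and for
`ker s ⊆ ker r` the inclusion `h(ker r) ⊆ h(ker s)` holds, corresponding to the map
`Prim A_r → Prim A_s` induced by the quotient `A_s → A_r` (which sends a primitive
ideal `P/ker r` of `A_r` to `P/ker s`, i.e. is the identity on the underlying
primitive ideals of `A`). -/
theorem primSpec_direct_limit
    (A : Type) [Ring A] [StarRing A] [Algebra ℂ A] [TopologicalSpace A]
    [IsTopologicalRing A] [ContinuousStar A] (hA : IsLocallyCStarAlgebra A) :
    -- the subsets h(ker s) cover Prim A
    (⋃ s ∈ ContCStarSeminorms A, hkHull (snKer s)) = (Set.univ : Set (PrimSpec A)) ∧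
    -- and for ker s ⊆ ker r, h(ker r) ⊆ h(ker s), the inclusion being induced by the
    -- quotient map A_s → A_r (i.e. given on primitive ideals of A by the identity)
    (∀ s ∈ ContCStarSeminorms A, ∀ r ∈ ContCStarSeminorms A,
      snKer s ≤ snKer r → hkHull (snKer r) ⊆ hkHull (snKer s)) :=
  primSpec_direct_limit_general A
end

section
/- Let A be a perfect locally C*-algebra. Then the hull-kernel topology and the direct limit topology on Prim A coincide: a subset C ⊆ Prim A is closed in the hull-kernel topology if and only if C ∩ h(ker s) is closed in the hull-kernel topology for every continuous C*-seminorm s on A. -/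
/-- The hull-kernel closure operation on subsets of the primitive spectrum. -/
def hkClosure {A : Type} [Ring A] [StarRing A] [Algebra ℂ A] [TopologicalSpace A]
    (F : Set (PrimSpec A)) : Set (PrimSpec A) :=
  {P | sInf (Subtype.val '' F) ≤ P.val}

/-- The set `Sppd s` of elements supported in the seminorm `s`. -/
def Sppd {A : Type} [Ring A] [StarRing A] [Algebra ℂ A] (s : A → ℝ) : Set A :=
  {a : A | ∀ b : A, s b = 0 → a * b = 0}

/-- `A` is a perfect locally C*-algebra: the sum of the ideals `Sppd s`, `s ∈ S(A)`,
is dense in `A`. -/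
def IsPerfect (A : Type) [Ring A] [StarRing A] [Algebra ℂ A] [TopologicalSpace A] :
    Prop :=
  closure (↑(Submodule.span ℂ (⋃ s ∈ ContCStarSeminorms A, Sppd s)) : Set A) =
    Set.univ

namespace IrreducibleRep

variable {A : Type} [Ring A] [StarRing A] [Algebra ℂ A] [TopologicalSpace A]
  (ρ : IrreducibleRep A)

theorem eq_zero_or_eq_zero_of_mul_mul_eq_zero {a b : A} (h : ∀ c, ρ.π (a * c * b) = 0) :
    ρ.π a = 0 ∨ ρ.π b = 0 := by
  set W : Submodule ℂ ρ.H :=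
    (Submodule.span ℂ (Set.range fun p : A × ρ.H => ρ.π (p.1 * b) p.2)).topologicalClosure
  have hW : ∀ c, W ∈ Module.End.invtSubmodule (ρ.π c : ρ.H →ₗ[ℂ] ρ.H) := fun c =>
    Submodule.topologicalClosure_mem_invtSubmodule <| by
      rw [Module.End.mem_invtSubmodule_iff_map_le, Submodule.map_span_le]
      rintro _ ⟨⟨d, v⟩, rfl⟩
      refine Submodule.subset_span ⟨⟨c * d, v⟩, ?_⟩
      simp [mul_assoc]
  have hbW : ∀ v, ρ.π b v ∈ W := fun v =>
    Submodule.le_topologicalClosure _ (Submodule.subset_span ⟨⟨1, v⟩, by simp⟩)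
  rcases ρ.irred W (Submodule.isClosed_topologicalClosure _)
    (fun c _ hv => hW c hv) with hbot | htop
  · right
    ext v
    simpa [hbot] using hbW v
  · left
    have hker : W ≤ LinearMap.ker (ρ.π a : ρ.H →ₗ[ℂ] ρ.H) := by
      refine Submodule.topologicalClosure_minimal _ ?_ (ContinuousLinearMap.isClosed_ker _)
      rw [Submodule.span_le]
      rintro _ ⟨⟨c, v⟩, rfl⟩
      simpa [mul_assoc] using congr($(h c) v)
    ext v
    simpa using hker (htop ▸ Submodule.mem_top : v ∈ W)

end IrreducibleRep

theorem IsCStarSeminorm.mem_snKer {A : Type} [Ring A] [StarRing A] [Algebra ℂ A] {s : A → ℝ}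
    (hs : IsCStarSeminorm s) {a : A} :
    a ∈ snKer s ↔ s a = 0 := by
  obtain ⟨hpos, hadd, hsmul, hmul, -, -⟩ := hs
  have of_nonpos : ∀ {x}, s x ≤ 0 → s x = 0 := fun h => le_antisymm h (hpos _)
  let Z : TwoSidedIdeal A := .mk' {a | s a = 0}
    (by simpa using hsmul 0 0)
    (fun hx hy => of_nonpos <| (hadd _ _).trans_eq (by simp_all))
    (fun {x} (hx : s x = 0) => show s (-x) = 0 by simpa [hx] using hsmul (-1) x)
    (fun hy => of_nonpos <| (hmul _ _).trans_eq (by simp_all))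
    (fun hx => of_nonpos <| (hmul _ _).trans_eq (by simp_all))
  refine ⟨fun ha => ?_, fun ha => (TwoSidedIdeal.mem_sInf _).mpr fun I hI => hI ha⟩
  have : snKer s ≤ Z := sInf_le fun x hx => (TwoSidedIdeal.mem_mk' ..).mpr hx
  simpa [Z] using this ha

section

variable {A : Type} [Ring A] [StarRing A] [Algebra ℂ A] [TopologicalSpace A]

theorem IsPerfect.exists_sppd_not_subset (hperf : IsPerfect A) {M : Submodule ℂ A}
    (hM : IsClosed (M : Set A)) (hM_ne : M ≠ ⊤) :
    ∃ s ∈ ContCStarSeminorms A, ¬ Sppd s ⊆ M := by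
  by_contra! h
  refine hM_ne (eq_top_iff.mpr fun a _ => ?_)
  have hspan : closure (Submodule.span ℂ (⋃ s ∈ ContCStarSeminorms A, Sppd s) : Set A) ⊆ M :=
    closure_minimal (Submodule.span_le.mpr (Set.iUnion₂_subset h)) hM
  exact hspan (hperf ▸ Set.mem_univ a)

namespace IsPrimitiveIdeal

variable {P : TwoSidedIdeal A}

theorem mem_or_mem (hP : IsPrimitiveIdeal P) {a b : A} (h : ∀ c, a * c * b ∈ P) :
    a ∈ P ∨ b ∈ P := by
  obtain ⟨ρ, hρ⟩ := hP
  simpa only [hρ] using ρ.eq_zero_or_eq_zero_of_mul_mul_eq_zero fun c => (hρ _).mp (h c)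

theorem le_of_forall_mul_mem (hP : IsPrimitiveIdeal P) {I : Set A} {J : TwoSidedIdeal A}
    (hI : ¬ I ⊆ P) (hIJ : ∀ a ∈ I, ∀ b ∈ J, a * b ∈ P) : J ≤ P := by
  obtain ⟨a, haI, haP⟩ := Set.not_subset.mp hI
  exact fun b hb => (hP.mem_or_mem fun c => mul_assoc a c b ▸ hIJ a haI _
    (J.mul_mem_left c b hb)).resolve_left haP

theorem one_notMem (hP : IsPrimitiveIdeal P) : (1 : A) ∉ P := by
  obtain ⟨ρ, hρ⟩ := hP
  rw [hρ, map_one]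
  exact one_ne_zero

theorem isClosed (hP : IsPrimitiveIdeal P) : IsClosed (P : Set A) := by
  obtain ⟨ρ, hρ⟩ := hP
  convert isClosed_singleton.preimage ρ.cont
  ext a
  exact hρ a

theorem exists_sppd_not_subset (hP : IsPrimitiveIdeal P) (hperf : IsPerfect A) :
    ∃ s ∈ ContCStarSeminorms A, ¬ Sppd s ⊆ P :=
  hperf.exists_sppd_not_subset (M := P.asIdeal.restrictScalars ℂ) hP.isClosed
    fun h => hP.one_notMem (Submodule.eq_top_iff'.mp h 1)

theorem sppd_subset_or_snKer_le (hP : IsPrimitiveIdeal P) {s : A → ℝ}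
    (hs : IsCStarSeminorm s) : Sppd s ⊆ P ∨ snKer s ≤ P :=
  or_iff_not_imp_left.mpr fun h => hP.le_of_forall_mul_mem h fun _ ha b hb =>
    (ha b (hs.mem_snKer.mp hb)).symm ▸ P.zero_mem

end IsPrimitiveIdeal

theorem subset_hkClosure (F : Set (PrimSpec A)) : F ⊆ hkClosure F :=
  fun _ hP => sInf_le (Set.mem_image_of_mem Subtype.val hP)

theorem hkClosure_inter_hkHull_subset (F : Set (PrimSpec A)) (I : TwoSidedIdeal A) :
    hkClosure (F ∩ hkHull I) ⊆ hkClosure F ∩ hkHull I := by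
  intro P (hP : sInf (Subtype.val '' (F ∩ hkHull I)) ≤ P.val)
  refine ⟨(sInf_le_sInf (Set.image_mono Set.inter_subset_left)).trans hP, le_trans ?_ hP⟩
  exact le_sInf fun _ ⟨Q, ⟨_, hQ⟩, hQP⟩ => hQP ▸ hQ

theorem mem_hkClosure_inter_hkHull_snKer {C : Set (PrimSpec A)} {P : PrimSpec A} {s : A → ℝ}
    (hs : IsCStarSeminorm s) (hP : P ∈ hkClosure C) (hsP : ¬ Sppd s ⊆ P.val) :
    P ∈ hkClosure (C ∩ hkHull (snKer s)) := by
  refine P.2.le_of_forall_mul_mem hsP fun a ha b hb => hP ?_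
  refine (TwoSidedIdeal.mem_sInf _).mpr ?_
  rintro _ ⟨Q, hQC, rfl⟩
  rcases Q.2.sppd_subset_or_snKer_le hs with hsQ | hsQ
  · exact Q.1.mul_mem_right _ _ (hsQ ha)
  · exact Q.1.mul_mem_left _ _ (sInf_le (Set.mem_image_of_mem Subtype.val
      (show Q ∈ C ∩ hkHull (snKer s) from ⟨hQC, hsQ⟩)) hb)

end

theorem perfect_hull_kernel_eq_direct_limit_general
    (A : Type) [Ring A] [StarRing A] [Algebra ℂ A] [TopologicalSpace A]
    (hperf : IsPerfect A) :
    ∀ C : Set (PrimSpec A), hkClosure C = C ↔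
      ∀ s ∈ ContCStarSeminorms A,
        hkClosure (C ∩ hkHull (snKer s)) = C ∩ hkHull (snKer s) := by
  intro C
  constructor
  · intro hC s _
    refine (subset_hkClosure _).antisymm' ?_
    simpa only [hC] using hkClosure_inter_hkHull_subset C (snKer s)
  · intro h
    refine (subset_hkClosure C).antisymm' fun P hP => ?_
    obtain ⟨s, hs, hsP⟩ := P.2.exists_sppd_not_subset hperf
    have hP' := mem_hkClosure_inter_hkHull_snKer hs.2 hP hsP
    rw [h s hs] at hP'
    exact hP'.1

/-- for a perfect locally C*-algebra `A`, the hull-kernel topology and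
the direct limit topology on `Prim A` coincide: a subset `C` is hull-kernel closed if
and only if `C ∩ h(ker s)` is hull-kernel closed for every continuous C*-seminorm `s`
on `A`. -/
theorem perfect_hull_kernel_eq_direct_limit
    (A : Type) [Ring A] [StarRing A] [Algebra ℂ A] [TopologicalSpace A]
    [IsTopologicalRing A] [ContinuousStar A]
    (hA : IsLocallyCStarAlgebra A) (hperf : IsPerfect A) :
    ∀ C : Set (PrimSpec A), hkClosure C = C ↔
      ∀ s ∈ ContCStarSeminorms A,
        hkClosure (C ∩ hkHull (snKer s)) = C ∩ hkHull (snKer s) :=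
  perfect_hull_kernel_eq_direct_limit_general A hperf
end
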